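/- Let (X,d) be a metric space, θ=(k_r) a lacunary sequence, f any unbounded modulus function, (A_k) a sequence in CL(X) and A ∈ CL(X). If (A_k) is Wijsman θ-lacunary f-strong Cesàro convergent to A, then (A_k) is Wijsman θ-lacunary strong Cesàro convergent to A. -/

import Mathlib

open Filter Metric Set

/-- `f : ℝ → ℝ` is an (unbounded) modulus function (considered on `[0,∞)`):
`f x = 0 ↔ x = 0`, subadditive, increasing, continuous from the right at `0`,
and unbounded. -/
def IsModulus (f : ℝ → ℝ) : Prop :=
  (∀ x ∈ Set.Ici (0:ℝ), 0 ≤ f x) ∧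
  (∀ x ∈ Set.Ici (0:ℝ), (f x = 0 ↔ x = 0)) ∧
  (∀ x ∈ Set.Ici (0:ℝ), ∀ y ∈ Set.Ici (0:ℝ), f (x + y) ≤ f x + f y) ∧
  MonotoneOn f (Set.Ici (0:ℝ)) ∧
  ContinuousWithinAt f (Set.Ici (0:ℝ)) 0 ∧
  (∀ M : ℝ, ∃ x ∈ Set.Ici (0:ℝ), M < f x)

/-- `φ(ε) = limsup_n f(nε)/f(n)`. -/
noncomputable def modPhi (f : ℝ → ℝ) (ε : ℝ) : ℝ :=
  Filter.limsup (fun n : ℕ => f ((n : ℝ) * ε) / f (n : ℝ)) Filter.atTop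

/-- A modulus function is compatible if `φ(ε) → 0` as `ε → 0⁺`. -/
def Compatible (f : ℝ → ℝ) : Prop :=
  Filter.Tendsto (modPhi f) (nhdsWithin 0 (Set.Ioi 0)) (nhds 0)

/-- Wijsman statistical convergence of a sequence of subsets of a metric space. -/
def WijsmanStatConv {X : Type*} [MetricSpace X] (A : ℕ → Set X) (B : Set X) : Prop :=
  ∀ x : X, ∀ ε > (0:ℝ),
    Filter.Tendsto (fun n : ℕ =>
      (((Finset.range n).filter
        (fun j => ε < |infDist x (A j) - infDist x B|)).card : ℝ) / (n : ℝ))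
      Filter.atTop (nhds 0)

/-- Wijsman `f`-statistical convergence of a sequence of subsets of a metric space. -/
def WijsmanFStatConv {X : Type*} [MetricSpace X] (f : ℝ → ℝ) (A : ℕ → Set X)
    (B : Set X) : Prop :=
  ∀ x : X, ∀ ε > (0:ℝ),
    Filter.Tendsto (fun n : ℕ =>
      f ((((Finset.range n).filter
        (fun j => ε < |infDist x (A j) - infDist x B|)).card : ℝ)) / f (n : ℝ))
      Filter.atTop (nhds 0)

/-- A real sequence is `f`-strong Cesàro convergent to `L`. -/
def FStrongCesaro (f : ℝ → ℝ) (x : ℕ → ℝ) (L : ℝ) : Prop :=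
  Filter.Tendsto (fun n : ℕ =>
    f (∑ j ∈ Finset.range n, |x j - L|) / f (n : ℝ)) Filter.atTop (nhds 0)

/-- Wijsman `f`-strong Cesàro convergence. -/
def WijsmanFStrongCesaro {X : Type*} [MetricSpace X] (f : ℝ → ℝ) (A : ℕ → Set X)
    (B : Set X) : Prop :=
  ∀ x : X, FStrongCesaro f (fun j => infDist x (A j)) (infDist x B)

/-- Wijsman strong Cesàro convergence (the case `f = id`). -/
def WijsmanStrongCesaro {X : Type*} [MetricSpace X] (A : ℕ → Set X) (B : Set X) : Prop :=
  ∀ x : X,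
    Filter.Tendsto (fun n : ℕ =>
      (∑ j ∈ Finset.range n, |infDist x (A j) - infDist x B|) / (n : ℝ))
      Filter.atTop (nhds 0)

/-- A real sequence is uniformly integrable. -/
def UnifIntegrable (x : ℕ → ℝ) : Prop :=
  Filter.Tendsto (fun c : ℝ =>
    ⨆ n : ℕ, (∑ j ∈ Finset.range n, if c ≤ |x j| then |x j| else 0) / (n : ℝ))
    Filter.atTop (nhds 0)

/-- Wijsman uniform integrability. -/
def WijsmanUnifIntegrable {X : Type*} [MetricSpace X] (A : ℕ → Set X) : Prop :=
  ∀ x : X, UnifIntegrable (fun j => infDist x (A j))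

/-- A lacunary sequence: strictly increasing, starting at `0`,
with gaps `h_r = k_{r+1} - k_r → ∞`. -/
def IsLacunary (k : ℕ → ℕ) : Prop :=
  k 0 = 0 ∧ StrictMono k ∧
    Filter.Tendsto (fun r : ℕ => k (r + 1) - k r) Filter.atTop Filter.atTop

/-- The gaps `h_r` of a lacunary sequence. -/
def lacH (k : ℕ → ℕ) (r : ℕ) : ℕ := k (r + 1) - k r

/-- The blocks `I_r = (k_r, k_{r+1}]` of a lacunary sequence. -/
def lacI (k : ℕ → ℕ) (r : ℕ) : Finset ℕ := Finset.Ioc (k r) (k (r + 1))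

/-- `φ_θ(ε) = limsup_t f(h_t ε)/f(h_t)`. -/
noncomputable def modPhiTheta (f : ℝ → ℝ) (k : ℕ → ℕ) (ε : ℝ) : ℝ :=
  Filter.limsup (fun t : ℕ => f ((lacH k t : ℝ) * ε) / f ((lacH k t : ℝ))) Filter.atTop

/-- `f` is `θ`-compatible if `φ_θ(ε) → 0` as `ε → 0⁺`. -/
def ThetaCompatible (f : ℝ → ℝ) (k : ℕ → ℕ) : Prop :=
  Filter.Tendsto (modPhiTheta f k) (nhdsWithin 0 (Set.Ioi 0)) (nhds 0)

/-- Wijsman `θ`-lacunary statistical convergence. -/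
def WijsmanLacStatConv {X : Type*} [MetricSpace X] (k : ℕ → ℕ) (A : ℕ → Set X)
    (B : Set X) : Prop :=
  ∀ x : X, ∀ ε > (0:ℝ),
    Filter.Tendsto (fun r : ℕ =>
      (((lacI k r).filter
        (fun j => ε < |infDist x (A j) - infDist x B|)).card : ℝ) / (lacH k r : ℝ))
      Filter.atTop (nhds 0)

/-- Wijsman `θ`-lacunary `f`-statistical convergence. -/
def WijsmanLacFStatConv {X : Type*} [MetricSpace X] (f : ℝ → ℝ) (k : ℕ → ℕ)
    (A : ℕ → Set X) (B : Set X) : Prop :=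
  ∀ x : X, ∀ ε > (0:ℝ),
    Filter.Tendsto (fun r : ℕ =>
      f ((((lacI k r).filter
        (fun j => ε < |infDist x (A j) - infDist x B|)).card : ℝ)) / f ((lacH k r : ℝ)))
      Filter.atTop (nhds 0)

/-- Wijsman `θ`-lacunary `f`-strong Cesàro convergence. -/
def WijsmanLacFStrongCesaro {X : Type*} [MetricSpace X] (f : ℝ → ℝ) (k : ℕ → ℕ)
    (A : ℕ → Set X) (B : Set X) : Prop :=
  ∀ x : X,
    Filter.Tendsto (fun r : ℕ =>
      f (∑ j ∈ lacI k r, |infDist x (A j) - infDist x B|) / f ((lacH k r : ℝ)))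
      Filter.atTop (nhds 0)

/-- Wijsman `θ`-lacunary strong Cesàro convergence (the case `f = id`). -/
def WijsmanLacStrongCesaro {X : Type*} [MetricSpace X] (k : ℕ → ℕ)
    (A : ℕ → Set X) (B : Set X) : Prop :=
  ∀ x : X,
    Filter.Tendsto (fun r : ℕ =>
      (∑ j ∈ lacI k r, |infDist x (A j) - infDist x B|) / (lacH k r : ℝ))
      Filter.atTop (nhds 0)

/-- A real sequence is `θ`-lacunary uniformly integrable. -/
def LacUnifIntegrable (k : ℕ → ℕ) (x : ℕ → ℝ) : Prop :=
  Filter.Tendsto (fun M : ℝ =>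
    ⨆ t : ℕ, (∑ j ∈ lacI k t, if M ≤ |x j| then |x j| else 0) / (lacH k t : ℝ))
    Filter.atTop (nhds 0)

/-- Wijsman `θ`-lacunary uniform integrability. -/
def WijsmanLacUnifIntegrable {X : Type*} [MetricSpace X] (k : ℕ → ℕ)
    (A : ℕ → Set X) : Prop :=
  ∀ x : X, LacUnifIntegrable k (fun j => infDist x (A j))

/-!
Subadditivity gives `f (n * y) ≤ n * f y`, so once `S ≥ h / n` monotonicity yields
`f h ≤ n * f S`, i.e. `f S / f h ≥ 1 / n`. Hence the ratios `f (S_r) / f (h_r)` can only tend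
to `0` if the plain ratios `S_r / h_r` do.
-/

namespace IsModulus

variable {f : ℝ → ℝ}

theorem map_zero (hf : IsModulus f) : f 0 = 0 :=
  (hf.2.1 0 self_mem_Ici).2 rfl

theorem apply_pos (hf : IsModulus f) {x : ℝ} (hx : 0 < x) : 0 < f x :=
  (hf.1 x hx.le).lt_of_ne fun h => hx.ne' ((hf.2.1 x hx.le).1 h.symm)

theorem apply_nat_mul_le (hf : IsModulus f) (n : ℕ) {y : ℝ} (hy : 0 ≤ y) :
    f (n * y) ≤ n * f y := by
  induction n with
  | zero => simp [hf.map_zero]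
  | succ m ih =>
    calc f ((m + 1 : ℕ) * y) = f (m * y + y) := by push_cast; ring_nf
      _ ≤ f (m * y) + f y := hf.2.2.1 _ (mem_Ici.2 (by positivity)) _ (mem_Ici.2 hy)
      _ ≤ (m + 1 : ℕ) * f y := by push_cast; linarith

theorem inv_le_apply_div_apply (hf : IsModulus f) {n : ℕ} {S H : ℝ} (hH : 0 < H)
    (hS : 0 ≤ S) (hle : H ≤ n * S) : (n : ℝ)⁻¹ ≤ f S / f H := by
  have hfH : f H ≤ n * f S :=
    (hf.2.2.2.1 (mem_Ici.2 hH.le) (mem_Ici.2 (by positivity)) hle).trans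
      (hf.apply_nat_mul_le n hS)
  have hn : (0 : ℝ) < n := pos_of_mul_pos_left (hH.trans_le hle) hS
  rw [le_div_iff₀ (hf.apply_pos hH), inv_mul_le_iff₀ hn]
  exact hfH

theorem tendsto_div_of_tendsto_apply_div {ι : Type*} {l : Filter ι} (hf : IsModulus f)
    {S H : ι → ℝ} (hS : ∀ i, 0 ≤ S i) (hH : ∀ i, 0 ≤ H i)
    (h : Tendsto (fun i => f (S i) / f (H i)) l (nhds 0)) :
    Tendsto (fun i => S i / H i) l (nhds 0) := by
  refine tendsto_order.2 ⟨fun a ha => Eventually.of_forall fun i =>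
    ha.trans_le (div_nonneg (hS i) (hH i)), fun ε hε => ?_⟩
  obtain ⟨n, hn⟩ := exists_nat_gt ε⁻¹
  have hn0 : (0 : ℝ) < n := (inv_pos.2 hε).trans hn
  have hnε : 1 < n * ε := by rwa [inv_lt_iff_one_lt_mul₀ hε] at hn
  filter_upwards [(tendsto_order.1 h).2 _ (inv_pos.2 hn0)] with i hi
  rcases (hH i).eq_or_lt with hH0 | hHpos
  · simpa [← hH0] using hε
  by_contra! hle
  have hεS : ε * H i ≤ S i := (le_div_iff₀ hHpos).1 hle
  have hHS : H i ≤ n * S i := by nlinarith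
  exact hi.not_ge (hf.inv_le_apply_div_apply hHpos (hS i) hHS)

end IsModulus

theorem wijsman_lac_fcesaro_imp_lac_cesaro_general {X : Type*} [MetricSpace X]
    (k : ℕ → ℕ) (f : ℝ → ℝ) (hf : IsModulus f)
    (A : ℕ → Set X) (B : Set X)
    (h : WijsmanLacFStrongCesaro f k A B) : WijsmanLacStrongCesaro k A B :=
  fun x => hf.tendsto_div_of_tendsto_apply_div
    (fun _ => Finset.sum_nonneg fun _ _ => abs_nonneg _) (fun _ => Nat.cast_nonneg _) (h x)

theorem wijsman_lac_fcesaro_imp_lac_cesaro {X : Type*} [MetricSpace X]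
    (k : ℕ → ℕ) (hk : IsLacunary k) (f : ℝ → ℝ) (hf : IsModulus f)
    (A : ℕ → Set X) (B : Set X)
    (hA : ∀ n, (A n).Nonempty ∧ IsClosed (A n)) (hB : B.Nonempty ∧ IsClosed B)
    (h : WijsmanLacFStrongCesaro f k A B) : WijsmanLacStrongCesaro k A B :=
  wijsman_lac_fcesaro_imp_lac_cesaro_general k f hf A B h
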